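/- arXiv:1305.5139 — 4 statements merged into one kernel-verified Lean document; each statement's English description precedes it below -/
import Mathlib

section
/- Let L be a local ring with 2 invertible, and let R = M_n(L) be the n×n matrix ring over L. If R has an involution of type σ (σ an automorphism of the center of L), then L has an involution of type σ. The same conclusion holds if L is a division ring (without any assumption on 2). -/
universe u

open Matrix

section basic
variable {L : Type u} [Ring L] {n : ℕ}

lemma IDFM.sandwich (i j i' j' : Fin n) (c d : L) (X : Matrix (Fin n) (Fin n) L) :
    single i j c * X * single i' j' d = single i j' (c * X j i' * d) := by
  ext p q
  rcases eq_or_ne i p with rfl|hp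
  · rcases eq_or_ne j' q with rfl|hq
    · simp
    · rw [Matrix.mul_single_apply_of_ne (hbj := hq.symm),
        Matrix.single_apply_of_ne i j' _ i q (by tauto)]
  · rw [Matrix.mul_assoc,
      Matrix.single_mul_apply_of_ne (h := hp.symm),
      Matrix.single_apply_of_ne i j' _ p q (by tauto)]

lemma IDFM.corner [NeZero n] (X : Matrix (Fin n) (Fin n) L)
    (h : single 0 0 (1:L) * X * single 0 0 (1:L) = X) :
    X = single 0 0 (X 0 0) := by
  conv_lhs => rw [← h]
  rw [IDFM.sandwich, one_mul, mul_one]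

lemma IDFM.central_smul_mul {z : L} (hz : z ∈ Subring.center L) (A B : Matrix (Fin n) (Fin n) L) :
    A * (z • B) = z • (A * B) := by
  ext p q
  simp only [Matrix.mul_apply, Matrix.smul_apply, smul_eq_mul, Finset.mul_sum]
  refine Finset.sum_congr rfl fun k _ => ?_
  rw [← mul_assoc, (Subring.mem_center_iff.mp hz (A p k)), mul_assoc]
lemma IDFM.one_eq_sum : (1 : Matrix (Fin n) (Fin n) L) = ∑ i, single i i (1:L) := by
  ext p q
  rw [Matrix.sum_apply]
  rcases eq_or_ne p q with rfl|h
  · rw [Finset.sum_eq_single p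
      (fun b _ hb => Matrix.single_apply_of_ne b b (1:L) p p (by tauto))
      (fun hb => absurd (Finset.mem_univ p) hb)]
    simp
  · rw [Matrix.one_apply_ne h, Finset.sum_eq_zero]
    intro b _
    exact Matrix.single_apply_of_ne b b (1:L) p q (by rintro ⟨rfl, rfl⟩; exact h rfl)

end basic

section localring
variable {L : Type u} [Ring L] [IsLocalRing L]

lemma IDFM.unit_of_add {x y : L} (h : IsUnit (x + y)) : IsUnit x ∨ IsUnit y := by
  obtain ⟨u, hu⟩ := h
  have h1 : (↑u⁻¹ : L) * x + (↑u⁻¹ : L) * y = 1 := by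
    rw [← mul_add, ← hu, Units.inv_mul]
  rcases IsLocalRing.isUnit_or_isUnit_of_add_one h1 with h2 | h2
  · left
    have := u.isUnit.mul h2
    rwa [← mul_assoc, Units.mul_inv, one_mul] at this
  · right
    have := u.isUnit.mul h2
    rwa [← mul_assoc, Units.mul_inv, one_mul] at this

lemma IDFM.units_of_mul_eq_one {x y : L} (h : x * y = 1) : IsUnit x ∧ IsUnit y := by
  rcases IsLocalRing.isUnit_or_isUnit_of_add_one (a := y * x) (b := 1 - y * x)
      (by abel) with hv | hv
  · obtain ⟨v, hv⟩ := hv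
    have hlx : ((↑v⁻¹ : L) * y) * x = 1 := by rw [mul_assoc, ← hv, Units.inv_mul]
    have hl : (↑v⁻¹ : L) * y = y := by
      have h2 : ((↑v⁻¹ : L) * y) * (x * y) = ((↑v⁻¹ : L) * y) * x * y := by
        simp only [mul_assoc]
      rw [h, mul_one, hlx, one_mul] at h2
      exact h2
    rw [hl] at hlx
    exact ⟨⟨⟨x, y, h, hlx⟩, rfl⟩, ⟨⟨y, x, hlx, h⟩, rfl⟩⟩
  · exfalso
    have h0 : x * (1 - y * x) = 0 := by
      have hx : x * (y * x) = x := by rw [← mul_assoc, h, one_mul]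
      rw [mul_sub, mul_one, hx, sub_self]
    obtain ⟨w, hw⟩ := hv
    have hx0 : x = 0 := by
      have h3 := congrArg (· * (↑w⁻¹ : L)) h0
      simp only [zero_mul] at h3
      rwa [mul_assoc, ← hw, Units.mul_inv, mul_one] at h3
    rw [hx0, zero_mul] at h
    exact one_ne_zero h.symm

lemma IDFM.nonunit_mul {x : L} (hx : ¬ IsUnit x) (a b : L) : ¬ IsUnit (a * x * b) := by
  intro h
  obtain ⟨u, hu⟩ := h
  have h1 := u.inv_mul
  rw [hu, ← mul_assoc] at h1
  obtain ⟨w, hw⟩ := (IDFM.units_of_mul_eq_one h1).1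
  have h3 := w.inv_mul
  rw [hw, ← mul_assoc, ← mul_assoc] at h3
  exact hx (IDFM.units_of_mul_eq_one h3).2

lemma IDFM.idem_loc {x : L} (h : x * x = x) : x = 0 ∨ x = 1 := by
  rcases IsLocalRing.isUnit_or_isUnit_of_add_one (a := x) (b := 1 - x) (by abel) with hu | hu
  · right
    obtain ⟨u, hu⟩ := hu
    rw [← hu] at h
    have h2 := congrArg (((↑u⁻¹ : L)) * ·) h
    rw [← mul_assoc, Units.inv_mul, one_mul] at h2
    rw [← hu, h2]
  · left
    obtain ⟨w, hw⟩ := hu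
    have h0 : x * (1 - x) = 0 := by rw [mul_sub, mul_one, h, sub_self]
    have h3 := congrArg (· * (↑w⁻¹ : L)) h0
    simp only [zero_mul] at h3
    rwa [mul_assoc, ← hw, Units.mul_inv, mul_one] at h3

end localring

section localmatrix
variable {L : Type u} [Ring L] [IsLocalRing L] {n : ℕ} [NeZero n]

lemma IDFM.nonunit_mul_left {x : L} (hx : ¬ IsUnit x) (y : L) : ¬ IsUnit (x * y) := by
  have := IDFM.nonunit_mul hx 1 y
  rwa [one_mul] at this

lemma IDFM.nonunit_mul_right {x : L} (hx : ¬ IsUnit x) (y : L) : ¬ IsUnit (y * x) := by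
  have := IDFM.nonunit_mul hx y 1
  rwa [mul_one] at this

lemma IDFM.sum_nonunit {ι : Type*} {s : Finset ι} {g : ι → L}
    (h : ∀ i ∈ s, ¬ IsUnit (g i)) : ¬ IsUnit (∑ i ∈ s, g i) :=
  Finset.sum_induction g (fun z => ¬ IsUnit z)
    (fun a b ha hb hU => (IDFM.unit_of_add hU).elim ha hb) not_isUnit_zero h
lemma IDFM.fRf_idem
    (α : Matrix (Fin n) (Fin n) L → Matrix (Fin n) (Fin n) L)
    (hadd : ∀ x y, α (x + y) = α x + α y)
    (hmul : ∀ x y, α (x * y) = α y * α x)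
    (hinv : ∀ x, α (α x) = x)
    (x : Matrix (Fin n) (Fin n) L)
    (hfx : α (single 0 0 (1:L)) * x = x)
    (hxf : x * α (single 0 0 (1:L)) = x)
    (hxx : x * x = x) (hx0 : x ≠ 0) :
    x = α (single 0 0 (1:L)) := by
  set e : Matrix (Fin n) (Fin n) L := single 0 0 (1:L) with he
  set f := α e with hfdef
  have hzero : α 0 = 0 := by
    have := hadd 0 0
    rw [add_zero] at this
    exact left_eq_add.mp this
  have hαf : α f = e := hinv e
  set y := α x with hy
  have h1 : y * e = y := by
    conv_rhs => rw [hy, ← hfx]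
    rw [hmul, hαf, ← hy]
  have h2 : e * y = y := by
    conv_rhs => rw [hy, ← hxf]
    rw [hmul, hαf, ← hy]
  have hcorner : e * y * e = y := by rw [mul_assoc, h1, h2]
  have hyst : y = single 0 0 (y 0 0) := IDFM.corner y hcorner
  have hyy : y * y = y := by rw [hy, ← hmul, hxx]
  set c := y 0 0 with hc
  have hcc : c * c = c := by
    have := hyy
    rw [hyst, Matrix.single_mul_single_same] at this
    have := congrArg (fun M => M 0 0) this
    simpa using this
  rcases IDFM.idem_loc hcc with h0 | h1'
  · exfalso
    apply hx0
    have : y = 0 := by rw [hyst, h0, Matrix.single_zero]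
    rw [← hinv x, ← hy, this, hzero]
  · have : y = e := by rw [hyst, h1']
    rw [← hinv x, ← hy, this]

theorem IDFM.descend
    (σ : Subring.center L ≃+* Subring.center L)
    (α : Matrix (Fin n) (Fin n) L → Matrix (Fin n) (Fin n) L)
    (hadd : ∀ x y, α (x + y) = α x + α y)
    (hmul : ∀ x y, α (x * y) = α y * α x)
    (hinv : ∀ x, α (α x) = x)
    (htype : ∀ c : Subring.center L,
      α ((c : L) • (1 : Matrix (Fin n) (Fin n) L)) =
        ((σ c : Subring.center L) : L) • (1 : Matrix (Fin n) (Fin n) L))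
    (a b : Matrix (Fin n) (Fin n) L)
    (hea : single 0 0 (1:L) * a = a)
    (haf : a * α (single 0 0 (1:L)) = a)
    (hfb : α (single 0 0 (1:L)) * b = b)
    (hbe : b * single 0 0 (1:L) = b)
    (hsym : α a = a ∨ α a = - a)
    (hcu : IsUnit ((a * b) 0 0)) :
    ∃ β : L → L, (∀ x y, β (x + y) = β x + β y) ∧ (∀ x y, β (x * y) = β y * β x) ∧
      β 1 = 1 ∧ (∀ x, β (β x) = x) ∧
      ∀ c : Subring.center L, β (c : L) = ((σ c : Subring.center L) : L) := by
  set e : Matrix (Fin n) (Fin n) L := single 0 0 (1:L) with he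
  set f := α e with hfdef
  set E : L → Matrix (Fin n) (Fin n) L := fun c => single 0 0 c with hE
  have hee : e * e = e := by
    rw [he, Matrix.single_mul_single_same, one_mul]
  have hEmul : ∀ c d : L, E c * E d = E (c * d) := fun c d =>
    Matrix.single_mul_single_same c 0 0 0 d
  have hEapp : ∀ c : L, E c 0 0 = c := fun c => Matrix.single_apply_same 0 0 c
  have hEe : ∀ c : L, E c * e = E c := by
    intro c; rw [he, Matrix.single_mul_single_same, mul_one]
  have heE : ∀ c : L, e * E c = E c := by
    intro c; rw [he, Matrix.single_mul_single_same, one_mul]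
  -- a * b lies in the corner eRe
  have hab_corner : a * b = E ((a * b) 0 0) := by
    apply IDFM.corner
    show e * (a * b) * e = a * b
    rw [Matrix.mul_assoc e (a*b) e, Matrix.mul_assoc a b e, hbe, ← Matrix.mul_assoc e a b, hea]
  obtain ⟨u, hu⟩ := hcu
  set b' := b * E ((↑u⁻¹ : L)) with hb'
  have hfb' : f * b' = b' := by rw [hb', ← Matrix.mul_assoc, hfb]
  have hb'e : b' * e = b' := by rw [hb', Matrix.mul_assoc, hEe]
  have hab2 : a * b' = e := by
    rw [hb', ← Matrix.mul_assoc, hab_corner, hEmul, ← hu, Units.mul_inv]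
  -- b' * a = f
  have he0 : e ≠ 0 := by
    intro h0
    have := congrArg (fun M => M 0 0) h0
    simp only [he, Matrix.single_apply_same, Matrix.zero_apply] at this
    exact one_ne_zero this
  have hba2 : b' * a = f := by
    apply IDFM.fRf_idem α hadd hmul hinv
    · rw [← Matrix.mul_assoc, hfb']
    · rw [Matrix.mul_assoc, haf]
    · rw [Matrix.mul_assoc, ← Matrix.mul_assoc a, hab2, hea]
    · intro h0
      apply he0
      have h5 : a * (b' * a) * b' = a * b' * (a * b') := by
        simp only [Matrix.mul_assoc]
      rw [h0, Matrix.mul_zero, Matrix.zero_mul, hab2] at h5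
      rw [← hee, ← h5]
  -- basic symmetry facts
  have hzero : α 0 = 0 := by
    have h := hadd 0 0
    rw [add_zero] at h
    exact left_eq_add.mp h
  have hαf : α f = e := hinv e
  have hff : f * f = f := by rw [hfdef, ← hmul, hee]
  -- corner facts for α b'
  have hαb'_eq : α b' = (f * α b') * e := by
    calc α b' = α ((f * b') * e) := by rw [hfb', hb'e]
      _ = α e * α (f * b') := hmul (f * b') e
      _ = α e * (α b' * α f) := by rw [hmul f b']
      _ = f * (α b' * e) := by rw [hαf, ← hfdef]
      _ = (f * α b') * e := (mul_assoc f (α b') e).symm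
  have hfαb' : f * α b' = α b' := by
    conv_lhs => rw [hαb'_eq]
    rw [← Matrix.mul_assoc, ← Matrix.mul_assoc, hff, ← hαb'_eq]
  have hαb'e : α b' * e = α b' := by
    conv_lhs => rw [hαb'_eq]
    rw [Matrix.mul_assoc, hee, ← hαb'_eq]
  -- sign of b'
  have hsign : (α a = a ∧ α b' = b') ∨ (α a = -a ∧ α b' = -b') := by
    have h8 := hmul a b'
    rw [hab2, ← hfdef] at h8
    rcases hsym with hs | hs
    · left
      refine ⟨hs, ?_⟩
      rw [hs] at h8
      calc α b' = α b' * e := (hαb'e).symm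
        _ = α b' * (a * b') := by rw [hab2]
        _ = (α b' * a) * b' := by rw [Matrix.mul_assoc]
        _ = f * b' := by rw [← h8]
        _ = b' := hfb'
    · right
      refine ⟨hs, ?_⟩
      rw [hs, Matrix.mul_neg] at h8
      have h9 : α b' * a = -f := by rw [h8, neg_neg]
      calc α b' = α b' * e := (hαb'e).symm
        _ = α b' * (a * b') := by rw [hab2]
        _ = (α b' * a) * b' := by rw [Matrix.mul_assoc]
        _ = (-f) * b' := by rw [h9]
        _ = -(f * b') := by rw [Matrix.neg_mul]
        _ = -b' := by rw [hfb']
  -- smul facts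
  have hsmul_e : ∀ z : L, z • e = E z := by
    intro z
    rw [he, Matrix.smul_single, smul_eq_mul, mul_one]
  have hαE : ∀ c : Subring.center L, α (E (c : L)) = ((σ c : Subring.center L) : L) • f := by
    intro c
    have h7 : (E (c : L)) = e * ((c : L) • (1 : Matrix (Fin n) (Fin n) L)) := by
      rw [IDFM.central_smul_mul c.2 e 1, mul_one, hsmul_e]
    rw [h7, hmul, htype, Matrix.smul_mul, one_mul, ← hfdef]
  -- corner facts for α (E c)
  have hαEf : ∀ c : L, α (E c) * f = α (E c) := by
    intro c
    conv_rhs => rw [← heE c]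
    rw [hmul e (E c), ← hfdef]
  have hfαE : ∀ c : L, f * α (E c) = α (E c) := by
    intro c
    conv_rhs => rw [← hEe c]
    rw [hmul (E c) e, ← hfdef]
  -- the descended map
  set F : L → Matrix (Fin n) (Fin n) L := fun c => a * α (E c) * b' with hF
  have hFcorner : ∀ c : L, F c = E ((F c) 0 0) := by
    intro c
    apply IDFM.corner
    show e * (F c) * e = F c
    rw [hF]
    simp only [Matrix.mul_assoc]
    rw [hb'e, ← Matrix.mul_assoc e a, hea]
  have hFadd : ∀ c d : L, F (c + d) = F c + F d := by
    intro c d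
    have hEadd : E (c + d) = E c + E d := Matrix.single_add 0 0 c d
    rw [hF]
    simp only
    rw [hEadd, hadd, Matrix.mul_add, Matrix.add_mul]
  have hFmul : ∀ c d : L, F (c * d) = F d * F c := by
    intro c d
    rw [hF]
    simp only
    rw [← hEmul, hmul (E c) (E d)]
    simp only [Matrix.mul_assoc]
    rw [← Matrix.mul_assoc b' a, hba2, ← Matrix.mul_assoc f, hfαE c]
  have hF1 : F 1 = e := by
    show a * α (E 1) * b' = e
    have h10 : E (1 : L) = e := rfl
    rw [h10, ← hfdef, haf, hab2]
  have hFinv : ∀ c : L, F ((F c) 0 0) = E c := by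
    intro c
    have h11 : F ((F c) 0 0) = a * α (F c) * b' := by
      conv_lhs => rw [hF]
      simp only
      rw [← hFcorner c]
    rw [h11, hF]
    simp only
    rw [hmul (a * α (E c)) b', hmul a (α (E c)), hinv]
    rcases hsign with ⟨hsa, hsb⟩ | ⟨hsa, hsb⟩
    · rw [hsa, hsb]
      simp only [Matrix.mul_assoc]
      rw [hab2, hEe, ← Matrix.mul_assoc a b', hab2, heE]
    · rw [hsa, hsb]
      simp only [Matrix.neg_mul, Matrix.mul_neg, neg_neg]
      simp only [Matrix.mul_assoc]
      rw [hab2, hEe, ← Matrix.mul_assoc a b', hab2, heE]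
  have hFcent : ∀ c : Subring.center L, F (c : L) = E ((σ c : Subring.center L) : L) := by
    intro c
    rw [hF]
    simp only
    rw [hαE c, IDFM.central_smul_mul (σ c).2 a f, haf, Matrix.smul_mul, hab2, hsmul_e]
  -- conclude
  refine ⟨fun c => (F c) 0 0, ?_, ?_, ?_, ?_, ?_⟩
  · intro x y
    show F (x + y) 0 0 = F x 0 0 + F y 0 0
    rw [hFadd]
    simp [Matrix.add_apply]
  · intro x y
    show F (x * y) 0 0 = F y 0 0 * F x 0 0
    rw [hFmul]
    conv_lhs => rw [hFcorner y, hFcorner x]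
    rw [hEmul, hEapp]
  · show F 1 0 0 = 1
    rw [hF1, he]
    exact Matrix.single_apply_same 0 0 (1:L)
  · intro x
    show F (F x 0 0) 0 0 = x
    rw [hFinv, hEapp]
  · intro c
    show F (c : L) 0 0 = ((σ c : Subring.center L) : L)
    rw [hFcent, hEapp]

end localmatrix

/-- if `Mₙ(L)` has an involution of type `σ` for a local ring `L` with `2`
invertible (or a division ring `L`), then `L` has an involution of type `σ`. -/
theorem involution_descends_from_matrix_ring (L : Type u) [Ring L] [IsLocalRing L]
    (h2 : IsUnit (2 : L) ∨ ∀ x : L, x ≠ 0 → IsUnit x)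
    (n : ℕ) (hn : 0 < n)
    (σ : Subring.center L ≃+* Subring.center L)
    (α : Matrix (Fin n) (Fin n) L → Matrix (Fin n) (Fin n) L)
    (hadd : ∀ x y, α (x + y) = α x + α y)
    (hmul : ∀ x y, α (x * y) = α y * α x)
    (hone : α 1 = 1)
    (hinv : ∀ x, α (α x) = x)
    (htype : ∀ c : Subring.center L,
      α ((c : L) • (1 : Matrix (Fin n) (Fin n) L)) =
        ((σ c : Subring.center L) : L) • (1 : Matrix (Fin n) (Fin n) L)) :
    ∃ β : L → L, (∀ x y, β (x + y) = β x + β y) ∧ (∀ x y, β (x * y) = β y * β x) ∧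
      β 1 = 1 ∧ (∀ x, β (β x) = x) ∧
      ∀ c : Subring.center L, β (c : L) = ((σ c : Subring.center L) : L) := by
  haveI : NeZero n := ⟨hn.ne'⟩
  set e : Matrix (Fin n) (Fin n) L := single 0 0 (1:L) with he
  set f := α e with hfdef
  have hee : e * e = e := by rw [he, Matrix.single_mul_single_same, one_mul]
  have hff : f * f = f := by rw [hfdef, ← hmul, hee]
  have hαf : α f = e := hinv e
  have hαh : ∀ (s : Finset (Fin n)) (g : Fin n → Matrix (Fin n) (Fin n) L),
      α (∑ i ∈ s, g i) = ∑ i ∈ s, α (g i) :=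
    fun s g => map_sum (AddMonoidHom.mk' α hadd) g s
  -- Step A : some entry of f is a unit
  have hexists : ∃ i0 k : Fin n, IsUnit (f i0 k) := by
    by_contra hno
    push_neg at hno
    have hkey : ∀ (X Y : Matrix (Fin n) (Fin n) L) (p q : Fin n),
        ¬ IsUnit ((X * f * Y) p q) := by
      intro X Y p q
      rw [Matrix.mul_apply]
      apply IDFM.sum_nonunit
      intro m _
      apply IDFM.nonunit_mul_left
      rw [Matrix.mul_apply]
      apply IDFM.sum_nonunit
      intro l _
      exact IDFM.nonunit_mul_right (hno l m) (X p l)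
    have hEi : ∀ i : Fin n, α (single i i (1:L)) =
        α (single 0 i (1:L)) * f * α (single i 0 (1:L)) := by
      intro i
      have hsplit : single i i (1:L) =
          single i 0 (1:L) * e * single 0 i (1:L) := by
        rw [he, Matrix.single_mul_single_same, Matrix.single_mul_single_same,
          one_mul, one_mul]
      rw [hsplit, hmul, hmul, hfdef, Matrix.mul_assoc]
    have hone' : (1 : Matrix (Fin n) (Fin n) L) = ∑ i, α (single i i (1:L)) := by
      conv_lhs => rw [← hone, IDFM.one_eq_sum]
      rw [hαh]
    have h00 := congrArg (fun M : Matrix (Fin n) (Fin n) L => M 0 0) hone'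
    simp only [Matrix.sum_apply, Matrix.one_apply_eq] at h00
    refine IDFM.sum_nonunit (fun i _ => ?_) (h00 ▸ isUnit_one)
    rw [hEi i]
    exact hkey _ _ 0 0
  obtain ⟨i0, k, hUfik⟩ := hexists
  obtain ⟨μ, hμ⟩ := hUfik
  have hμne : (↑μ : L) ≠ 0 := by
    intro h0
    have := μ.inv_mul
    rw [h0, mul_zero] at this
    exact one_ne_zero this.symm
  -- Step B : the rank-one identity f = v ⊗ u
  set B : Matrix (Fin n) (Fin n) L := single k i0 (↑μ⁻¹ : L) with hB
  have hBfB : B * f * B = B := by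
    rw [hB, IDFM.sandwich, ← hμ, Units.inv_mul, one_mul]
  have hx_eq : f * B * f = f := by
    apply IDFM.fRf_idem α hadd hmul hinv
    · rw [← hfdef, ← Matrix.mul_assoc, ← Matrix.mul_assoc, hff]
    · rw [← hfdef, Matrix.mul_assoc, Matrix.mul_assoc, hff, ← Matrix.mul_assoc]
    · calc f * B * f * (f * B * f) = f * (B * f * B) * f := by
            simp only [Matrix.mul_assoc]
            rw [← Matrix.mul_assoc f f, hff]
          _ = f * B * f := by rw [hBfB, Matrix.mul_assoc]
    · intro h0
      have happ := congrArg (fun M : Matrix (Fin n) (Fin n) L => M i0 k) h0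
      simp only [Matrix.zero_apply] at happ
      rw [Matrix.mul_apply (M := f * B) (N := f)] at happ
      rw [Finset.sum_eq_single i0 (fun m _ hm => by
        rw [hB, Matrix.mul_single_apply_of_ne (hbj := hm), zero_mul])
        (fun hmem => absurd (Finset.mem_univ i0) hmem)] at happ
      rw [hB, Matrix.mul_single_apply_same] at happ
      rw [← hμ, Units.mul_inv, one_mul] at happ
      exact hμne happ
  -- Step C : explicit a, b with a*b = e, b*a = f
  set a : Matrix (Fin n) (Fin n) L := single 0 i0 (↑μ⁻¹ : L) * f with ha
  set b : Matrix (Fin n) (Fin n) L := f * single k 0 (1:L) with hb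
  have hea : e * a = a := by
    rw [ha, he, ← Matrix.mul_assoc, Matrix.single_mul_single_same, one_mul]
  have haf : a * f = a := by rw [ha, Matrix.mul_assoc, hff]
  have hfb : f * b = b := by rw [hb, ← Matrix.mul_assoc, hff]
  have hbe : b * e = b := by
    rw [hb, he, Matrix.mul_assoc, Matrix.single_mul_single_same, mul_one]
  have hab : a * b = e := by
    rw [ha, hb]
    calc single 0 i0 (↑μ⁻¹ : L) * f * (f * single k 0 (1:L))
        = single 0 i0 (↑μ⁻¹ : L) * f * single k 0 (1:L) := by
          simp only [Matrix.mul_assoc]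
          rw [← Matrix.mul_assoc f f, hff]
      _ = single 0 0 ((↑μ⁻¹ : L) * f i0 k * 1) := IDFM.sandwich _ _ _ _ _ _ _
      _ = e := by rw [mul_one, ← hμ, Units.inv_mul, he]
  have hba : b * a = f := by
    rw [hb, ha]
    calc f * single k 0 (1:L) * (single 0 i0 (↑μ⁻¹ : L) * f)
        = f * (single k 0 (1:L) * single 0 i0 (↑μ⁻¹ : L)) * f := by
          simp only [Matrix.mul_assoc]
      _ = f * B * f := by rw [Matrix.single_mul_single_same, one_mul, hB]
      _ = f := hx_eq
  -- symmetry corner facts for α a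
  have ha_corner : a = e * a * f := by rw [hea, haf]
  have hαa_eq : α a = e * α a * f := by
    calc α a = α ((e * a) * f) := by rw [hea, haf]
      _ = α f * α (e * a) := hmul (e * a) f
      _ = α f * (α a * α e) := by rw [hmul e a]
      _ = e * (α a * f) := by rw [hαf, ← hfdef]
      _ = e * α a * f := (mul_assoc e (α a) f).symm
  have heαa : e * α a = α a := by
    conv_lhs => rw [hαa_eq]
    rw [← Matrix.mul_assoc, ← Matrix.mul_assoc, hee, ← hαa_eq]
  have hαaf : α a * f = α a := by
    conv_lhs => rw [hαa_eq]
    rw [Matrix.mul_assoc (e * α a) f f, hff, ← hαa_eq]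
  -- the element s = a + α a and its companion
  have hsub : ∀ x y, α (x - y) = α x - α y :=
    fun x y => map_sub (AddMonoidHom.mk' α hadd) x y
  set s : Matrix (Fin n) (Fin n) L := a + α a with hs
  set s' : Matrix (Fin n) (Fin n) L := a - α a with hs'
  have hes : e * s = s := by rw [hs, Matrix.mul_add, hea, heαa]
  have hsf : s * f = s := by rw [hs, Matrix.add_mul, haf, hαaf]
  have hes' : e * s' = s' := by rw [hs', Matrix.mul_sub, hea, heαa]
  have hs'f : s' * f = s' := by rw [hs', Matrix.sub_mul, haf, hαaf]
  have hαs : α s = s := by rw [hs, hadd, hinv, add_comm]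
  have hαs' : α s' = -s' := by rw [hs', hsub, hinv, ← neg_sub]
  have habe : (a * b) 0 0 = 1 := by
    rw [hab, he]
    exact Matrix.single_apply_same 0 0 (1:L)
  -- package the corner conditions in the literal form needed by `descend'`
  have hlit : ∀ t : Matrix (Fin n) (Fin n) L, e * t = t → t * f = t →
      (single 0 0 (1:L) * t = t ∧ t * α (single 0 0 (1:L)) = t) := by
    intro t h1 h2
    constructor
    · rw [← he]; exact h1
    · rw [← he, ← hfdef]; exact h2
  have hfb_lit : α (single 0 0 (1:L)) * b = b := by
    rw [← he, ← hfdef]; exact hfb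
  have hbe_lit : b * single 0 0 (1:L) = b := by
    rw [← he]; exact hbe
  rcases h2 with h2u | hdiv
  · -- 2 is invertible
    have hsum : (s * b) 0 0 + (s' * b) 0 0 = 2 := by
      have h12 : s * b + s' * b = (e + e : Matrix (Fin n) (Fin n) L) := by
        rw [← Matrix.add_mul]
        have h13 : s + s' = a + a := by rw [hs, hs']; abel
        rw [h13, Matrix.add_mul, hab]
      have h14 := congrArg (fun M : Matrix (Fin n) (Fin n) L => M 0 0) h12
      simp only [Matrix.add_apply] at h14
      rw [h14, he, Matrix.single_apply_same, one_add_one_eq_two]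
    have hu2 : IsUnit ((s * b) 0 0 + (s' * b) 0 0) := by rw [hsum]; exact h2u
    rcases IDFM.unit_of_add hu2 with hcu1 | hcu2
    · exact IDFM.descend σ α hadd hmul hinv htype s b
        (hlit s hes hsf).1 (hlit s hes hsf).2 hfb_lit hbe_lit (Or.inl hαs) hcu1
    · exact IDFM.descend σ α hadd hmul hinv htype s' b
        (hlit s' hes' hs'f).1 (hlit s' hes' hs'f).2 hfb_lit hbe_lit (Or.inr hαs') hcu2
  · -- L is a division ring
    by_cases hc1 : IsUnit ((s * b) 0 0)
    · exact IDFM.descend σ α hadd hmul hinv htype s b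
        (hlit s hes hsf).1 (hlit s hes hsf).2 hfb_lit hbe_lit (Or.inl hαs) hc1
    · have hc0 : (s * b) 0 0 = 0 := by
        by_contra hne
        exact hc1 (hdiv _ hne)
      have hsb_corner : s * b = single 0 0 ((s * b) 0 0) := by
        apply IDFM.corner
        show e * (s * b) * e = s * b
        rw [Matrix.mul_assoc e (s*b) e, Matrix.mul_assoc s b e, hbe, ← Matrix.mul_assoc e s b, hes]
      have hsb0 : s * b = 0 := by
        rw [hsb_corner, hc0, Matrix.single_zero]
      have hs0 : s = 0 := by
        calc s = s * f := hsf.symm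
          _ = s * (b * a) := by rw [hba]
          _ = (s * b) * a := (Matrix.mul_assoc s b a).symm
          _ = 0 := by rw [hsb0, Matrix.zero_mul]
      have hαa_neg : α a = -a := by
        have h15 : a + α a = 0 := by rw [← hs, hs0]
        exact eq_neg_of_add_eq_zero_right h15
      exact IDFM.descend σ α hadd hmul hinv htype a b
        (hlit a hea haf).1 (hlit a hea haf).2 hfb_lit hbe_lit (Or.inr hαa_neg)
        (habe ▸ isUnit_one)
end

section
/- Let R be a ring, γ : R → R an anti-automorphism, and θ : R → R a map satisfying (a^γ b c)^θ = c^γ b^θ a for all a,b,c ∈ R and θ∘θ = id. If there exists a unit u ∈ R× with u^θ = u, then the map β : R → R defined by r^β = u^{-1} r^γ u is an involution of R (an anti-automorphism of order at most 2) having the same restriction to Cent(R) as γ. -/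
universe u

/-- if `γ` is an anti-automorphism of `R`, `θ` satisfies
`(aᵞ b c)ᶿ = cᵞ bᶿ a` and `θ ∘ θ = id`, and `u` is a unit fixed by `θ`, then
`β : r ↦ u⁻¹ rᵞ u` is an involution of `R` agreeing with `γ` on the center. -/
theorem conjugate_is_involution (R : Type u) [Ring R]
    (γ : R → R) (hγbij : Function.Bijective γ)
    (hγadd : ∀ x y, γ (x + y) = γ x + γ y)
    (hγmul : ∀ x y, γ (x * y) = γ y * γ x)
    (hγone : γ 1 = 1)
    (θ : R → R)
    (hrel : ∀ a b c : R, θ (γ a * b * c) = γ c * θ b * a)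
    (hθθ : ∀ x, θ (θ x) = x)
    (u : Rˣ) (hu : θ (u : R) = (u : R)) :
    let β : R → R := fun r => (↑u⁻¹ : R) * γ r * (u : R)
    (∀ x y, β (x + y) = β x + β y) ∧ (∀ x y, β (x * y) = β y * β x) ∧
      β 1 = 1 ∧ (∀ r, β (β r) = r) ∧
      ∀ c ∈ Subring.center R, β c = γ c := by
  intro β
  set t := θ 1 with ht
  have hγγ1 : γ (γ 1) = 1 := by rw [hγone, hγone]
  have hθc : ∀ c, θ c = γ c * t := by
    intro c
    have h := hrel 1 1 c
    simpa [hγone] using h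
  have key : ∀ x, γ t * γ (γ x) * t = x := by
    intro x
    have h1 := hθθ x
    rw [hθc x, hθc (γ x * t), hγmul] at h1
    exact h1
  have hvw : γ (↑u : R) * γ (↑u⁻¹ : R) = 1 := by
    rw [← hγmul]; simp [hγone]
  have hwv : γ (↑u⁻¹ : R) * γ (↑u : R) = 1 := by
    rw [← hγmul]; simp [hγone]
  have hvw' : ∀ x : R, γ (↑u : R) * (γ (↑u⁻¹ : R) * x) = x := by
    intro x; rw [← mul_assoc, hvw, one_mul]
  have hwv' : ∀ x : R, γ (↑u⁻¹ : R) * (γ (↑u : R) * x) = x := by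
    intro x; rw [← mul_assoc, hwv, one_mul]
  have hut : γ (↑u : R) * t = ↑u := by
    have h := hθc (↑u : R)
    rw [hu] at h
    exact h.symm
  have ht_eq : t = γ (↑u⁻¹ : R) * ↑u := by
    calc t = γ (↑u⁻¹ : R) * γ (↑u : R) * t := by rw [hwv, one_mul]
      _ = γ (↑u⁻¹ : R) * (γ (↑u : R) * t) := by rw [mul_assoc]
      _ = γ (↑u⁻¹ : R) * ↑u := by rw [hut]
  have hγtt : γ t * t = 1 := by
    have h := key 1
    rwa [hγγ1, mul_one] at h
  have htinv : t * ((↑u⁻¹ : R) * γ (↑u : R)) = 1 := by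
    rw [ht_eq]
    simp [mul_assoc, Units.mul_inv_cancel_left, hwv]
  have hγt : γ t = (↑u⁻¹ : R) * γ (↑u : R) := by
    calc γ t = γ t * (t * ((↑u⁻¹ : R) * γ (↑u : R))) := by rw [htinv, mul_one]
      _ = (γ t * t) * ((↑u⁻¹ : R) * γ (↑u : R)) := by rw [mul_assoc]
      _ = (↑u⁻¹ : R) * γ (↑u : R) := by rw [hγtt, one_mul]
  have htγt : t * γ t = 1 := by
    rw [hγt]; exact htinv
  have hγγ : ∀ x, γ (γ x) = t * x * γ t := by
    intro x
    have h := key x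
    calc γ (γ x) = (t * γ t) * γ (γ x) * (t * γ t) := by rw [htγt, one_mul, mul_one]
      _ = t * (γ t * γ (γ x) * t) * γ t := by simp only [mul_assoc]
      _ = t * x * γ t := by rw [h]
  refine ⟨?_, ?_, ?_, ?_, ?_⟩
  · intro x y
    show (↑u⁻¹ : R) * γ (x + y) * ↑u = _
    rw [hγadd, mul_add, add_mul]
  · intro x y
    show (↑u⁻¹ : R) * γ (x * y) * ↑u = ((↑u⁻¹ : R) * γ y * ↑u) * ((↑u⁻¹ : R) * γ x * ↑u)
    rw [hγmul]
    simp [mul_assoc, Units.mul_inv_cancel_left]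
  · show (↑u⁻¹ : R) * γ 1 * ↑u = 1
    rw [hγone, mul_one, Units.inv_mul]
  · intro r
    show (↑u⁻¹ : R) * γ ((↑u⁻¹ : R) * γ r * ↑u) * ↑u = r
    rw [hγmul, hγmul, hγγ, hγt, ht_eq]
    simp [mul_assoc, hvw', hwv', Units.mul_inv_cancel_left, Units.inv_mul_cancel_left]
  · intro c hc
    have hc' : ∀ g : R, g * c = c * g := Subring.mem_center_iff.mp hc
    have hγc : ∀ y : R, y * γ c = γ c * y := by
      intro y
      obtain ⟨x, rfl⟩ := hγbij.2 y
      rw [← hγmul, ← hγmul, hc' x]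
    show (↑u⁻¹ : R) * γ c * ↑u = γ c
    rw [hγc, mul_assoc, Units.inv_mul, mul_one]
end

section
/- Let R be a ring, γ an anti-automorphism of R, and θ : R → R an additive bijection satisfying (a^γ b c)^θ = c^γ b^θ a for all a,b,c ∈ R and θ∘θ = id. Then θ(Jac(R)) ⊆ Jac(R), 1^θ is a unit of R, and the restriction of γ to the center C of R is an involution of C (i.e., γ²|_C = id_C). -/
universe u

/-- The Jacobson radical of a (possibly noncommutative) ring, as a set. -/
def jacobsonSet (R : Type u) [Ring R] : Set R :=
  {a | ∀ r s : R, IsUnit (1 - r * a * s)}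

/-- if `γ` is an anti-automorphism of `R` and `θ` is an additive bijection
with `(aᵞ b c)ᶿ = cᵞ bᶿ a` and `θ ∘ θ = id`, then `θ` preserves the Jacobson radical,
`θ 1` is a unit, and `γ` restricts to an involution of the center. -/
theorem theta_properties (R : Type u) [Ring R]
    (γ : R → R) (hγbij : Function.Bijective γ)
    (hγadd : ∀ x y, γ (x + y) = γ x + γ y)
    (hγmul : ∀ x y, γ (x * y) = γ y * γ x)
    (hγone : γ 1 = 1)
    (θ : R → R) (hθbij : Function.Bijective θ)
    (hθadd : ∀ x y, θ (x + y) = θ x + θ y)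
    (hrel : ∀ a b c : R, θ (γ a * b * c) = γ c * θ b * a)
    (hθθ : ∀ x, θ (θ x) = x) :
    (∀ a ∈ jacobsonSet R, θ a ∈ jacobsonSet R) ∧
    IsUnit (θ 1) ∧
    (∀ c ∈ Subring.center R, γ (γ c) = c) := by
  obtain ⟨hγinj, hγsurj⟩ := hγbij
  have hγsub : ∀ x y, γ (x - y) = γ x - γ y := by
    intro x y
    have h := hγadd (x - y) y
    rw [sub_add_cancel] at h
    rw [eq_sub_of_add_eq h.symm]
  have hγunit : ∀ x : R, IsUnit x → IsUnit (γ x) := by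
    rintro x ⟨w, rfl⟩
    exact ⟨⟨γ w, γ w.inv, by rw [← hγmul, w.inv_val, hγone],
      by rw [← hγmul, w.val_inv, hγone]⟩, rfl⟩
  set u := θ 1 with hu
  have htheta : ∀ c, θ c = γ c * u := by
    intro c
    have h := hrel 1 1 c
    simpa [hγone] using h
  have hθu : θ u = 1 := hθθ 1
  have hγuu : γ u * u = 1 := (htheta u).symm.trans hθu
  have hrinj : ∀ x y : R, x * u = y * u → x = y := by
    intro x y h
    obtain ⟨a, rfl⟩ := hγsurj x
    obtain ⟨b, rfl⟩ := hγsurj y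
    have : θ a = θ b := by rw [htheta, htheta, h]
    exact congrArg γ (hθbij.injective this)
  have huγu : u * γ u = 1 := by
    apply hrinj
    rw [mul_assoc, hγuu, mul_one, one_mul]
  have hUnit : IsUnit u := ⟨⟨u, γ u, huγu, hγuu⟩, rfl⟩
  have hγγ : ∀ a, γ (γ a) * u = u * a := by
    intro a
    have h := hrel a 1 1
    rw [mul_one, mul_one, hγone, one_mul, htheta] at h
    exact h
  have hJγ : ∀ a ∈ jacobsonSet R, γ a ∈ jacobsonSet R := by
    intro a ha r s
    obtain ⟨r', rfl⟩ := hγsurj r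
    obtain ⟨s', rfl⟩ := hγsurj s
    have h : (1 : R) - γ r' * γ a * γ s' = γ (1 - s' * a * r') := by
      rw [hγsub, hγone, hγmul, hγmul, ← mul_assoc]
    rw [h]
    exact hγunit _ (ha s' r')
  refine ⟨?_, hUnit, ?_⟩
  · intro a ha r s
    rw [htheta a]
    have h := hJγ a ha r (u * s)
    have e : 1 - r * γ a * (u * s) = 1 - r * (γ a * u) * s := by
      rw [mul_assoc, mul_assoc, mul_assoc]
    rwa [e] at h
  · intro c hc
    rw [Subring.mem_center_iff] at hc
    apply hrinj
    rw [hγγ, hc u]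
end

section
/- Let D be a Dedekind domain and p ∈ D a nonzero prime element. Then the restriction map [I] ↦ [I·D[1/p]] from the Picard group (ideal class group) of D to the Picard group of the localization D[1/p] is a group isomorphism. -/
open scoped nonZeroDivisors

open FractionalIdeal

section General

variable {A : Type*} [CommRing A] {B : Type*} [CommRing B] {f : A →+* B}
variable {K : Type*} {M : Submonoid A} [CommRing K] [Algebra A K] [IsLocalization M K]
variable {L : Type*} {N : Submonoid B} [CommRing L] [Algebra B L] [IsLocalization N L]
variable (hf : M ≤ Submonoid.comap f N)

theorem extended_coeIdeal' (I : Ideal A) :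
    FractionalIdeal.extended L hf (I : FractionalIdeal M K) = ((I.map f : Ideal B) : FractionalIdeal N L) := by
  apply coeToSubmodule_injective
  beta_reduce
  rw [coe_extended_eq_span, coe_coeIdeal, IsLocalization.coeSubmodule, Ideal.map,
    Ideal.span, Submodule.map_span]
  congr 1
  have : ((I : FractionalIdeal M K) : Set K) = (algebraMap A K) '' I := by
    ext x
    simp [FractionalIdeal.mem_coeIdeal, Set.mem_image, eq_comm]
  rw [this, ← Set.image_comp, ← Set.image_comp]
  refine Set.image_congr' (fun x => ?_)
  simp [IsLocalization.map_eq hf]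

theorem extended_spanSingleton' (x : K) :
    FractionalIdeal.extended L hf (spanSingleton M x) =
      spanSingleton N (IsLocalization.map (S := K) L f hf x) := by
  apply coeToSubmodule_injective
  beta_reduce
  rw [coe_extended_eq_span, coe_spanSingleton]
  apply le_antisymm
  · rw [Submodule.span_le]
    rintro _ ⟨y, hy, rfl⟩
    obtain ⟨a, rfl⟩ := (FractionalIdeal.mem_spanSingleton M).mp (SetLike.mem_coe.mp hy)
    rw [Algebra.smul_def, _root_.map_mul, IsLocalization.map_eq hf, ← Algebra.smul_def]
    exact Submodule.smul_mem _ _ (Submodule.mem_span_singleton_self _)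
  · rw [Submodule.span_le, Set.singleton_subset_iff]
    exact Submodule.subset_span ⟨x, SetLike.mem_coe.mpr ((FractionalIdeal.mem_spanSingleton M).mpr ⟨1, one_smul _ _⟩), rfl⟩

end General

section MapCG

variable {A : Type*} [CommRing A] [IsDomain A] {B : Type*} [CommRing B] [IsDomain B]
  [Algebra A B] (hf : A⁰ ≤ Submonoid.comap (algebraMap A B) B⁰)

/-- The monoid hom of fractional ideals induced by extension. -/
noncomputable def extendedHom :
    FractionalIdeal A⁰ (FractionRing A) →* FractionalIdeal B⁰ (FractionRing B) where
  toFun := FractionalIdeal.extended (FractionRing B) hf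
  map_one' := FractionalIdeal.extended_one _ hf
  map_mul' I J := FractionalIdeal.extended_mul _ hf I J

/-- The induced map on class groups. -/
noncomputable def mapCG : ClassGroup A →* ClassGroup B :=
  QuotientGroup.lift _ ((ClassGroup.mk (FractionRing B)).comp (Units.map (extendedHom hf))) (by
    rintro u ⟨x, rfl⟩
    rw [MonoidHom.mem_ker, MonoidHom.comp_apply, ClassGroup.mk_eq_one_iff]
    refine ⟨⟨IsLocalization.map (S := FractionRing A) (FractionRing B) (algebraMap A B) hf (x : FractionRing A), ?_⟩⟩
    rw [Units.coe_map]
    show ((FractionalIdeal.extended (FractionRing B) hf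
        ((toPrincipalIdeal A (FractionRing A) x : FractionalIdeal A⁰ (FractionRing A))) :
          FractionalIdeal B⁰ (FractionRing B)) : Submodule B (FractionRing B)) = _
    rw [coe_toPrincipalIdeal, extended_spanSingleton', coe_spanSingleton])

end MapCG

section MapCG2

variable {A : Type*} [CommRing A] [IsDomain A] {B : Type*} [CommRing B] [IsDomain B]
  [Algebra A B] (hf : A⁰ ≤ Submonoid.comap (algebraMap A B) B⁰)

theorem mapCG_mk (u : (FractionalIdeal A⁰ (FractionRing A))ˣ) :
    mapCG hf (ClassGroup.mk (FractionRing A) u) = ClassGroup.mk (FractionRing B) (Units.map (extendedHom hf) u) := by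
  rw [← ClassGroup.Quot_mk_eq_mk]
  rfl

theorem mapCG_mk0 [IsDedekindDomain A] [IsDedekindDomain B]
    (I : (Ideal A)⁰) (J : (Ideal B)⁰)
    (hJ : (J : Ideal B) = (I : Ideal A).map (algebraMap A B)) :
    mapCG hf (ClassGroup.mk0 I) = ClassGroup.mk0 J := by
  rw [ClassGroup.mk0, MonoidHom.comp_apply, mapCG_mk, ← ClassGroup.mk_mk0 (FractionRing B)]
  congr 1
  apply Units.ext
  rw [Units.coe_map]
  show FractionalIdeal.extended (FractionRing B) hf
      ((FractionalIdeal.mk0 (FractionRing A) I : FractionalIdeal A⁰ (FractionRing A))) = _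
  rw [FractionalIdeal.coe_mk0, FractionalIdeal.coe_mk0, extended_coeIdeal', hJ]

end MapCG2

section Kernel

variable {D : Type*} [CommRing D] [IsDomain D] [IsDedekindDomain D] {p : D} (hp : Prime p)

theorem exists_pow_mul_le (hp : Prime p) {I J : Ideal D} (h : ∀ a ∈ I, ∃ n : ℕ, p ^ n * a ∈ J) :
    ∃ n : ℕ, Ideal.span {p} ^ n * I ≤ J := by
  classical
  obtain ⟨s, hs⟩ := IsNoetherian.noetherian I
  set g : D → ℕ := fun a => if ha : ∃ n : ℕ, p ^ n * a ∈ J then Nat.find ha else 0 with hg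
  refine ⟨s.sup g, ?_⟩
  rw [Ideal.span_singleton_pow, Ideal.span_singleton_mul_le_iff]
  have hle : I ≤ J.colon (Ideal.span {p ^ s.sup g}) := by
    rw [← hs, Submodule.span_le]
    intro a ha
    have hEx : ∃ n : ℕ, p ^ n * a ∈ J := h a (hs ▸ Ideal.subset_span ha)
    have h1 : p ^ g a * a ∈ J := by
      have := Nat.find_spec hEx
      simpa [hg, dif_pos hEx] using this
    have h2 : g a ≤ s.sup g := Finset.le_sup ha
    rw [SetLike.mem_coe, Ideal.mem_colon_span_singleton]
    have : a * p ^ s.sup g = p ^ (s.sup g - g a) * (p ^ g a * a) := by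
      rw [← mul_assoc, ← pow_add, Nat.sub_add_cancel h2, mul_comm]
    rw [this]
    exact Ideal.mul_mem_left _ _ h1
  intro z hz
  have := hle hz
  rw [Ideal.mem_colon_span_singleton] at this
  rwa [mul_comm]

theorem mk0_eq_mk0_of_map_eq (hp : Prime p) {I J : (Ideal D)⁰}
    (h : ∀ a ∈ (I : Ideal D), ∃ n : ℕ, p ^ n * a ∈ (J : Ideal D))
    (h' : ∀ a ∈ (J : Ideal D), ∃ n : ℕ, p ^ n * a ∈ (I : Ideal D)) :
    ClassGroup.mk0 I = ClassGroup.mk0 J := by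
  obtain ⟨n, hn⟩ := exists_pow_mul_le hp h
  obtain ⟨m, hm⟩ := exists_pow_mul_le hp h'
  set P : Ideal D := Ideal.span {p} with hP
  have hPprime : Prime P := by
    rw [Ideal.prime_iff_isPrime, Ideal.span_singleton_prime hp.ne_zero]
    · exact hp
    · rw [hP, Ne, Ideal.span_singleton_eq_bot]
      exact hp.ne_zero
  have hd1 : (J : Ideal D) ∣ P ^ n * I := Ideal.dvd_iff_le.mpr hn
  obtain ⟨C, hC⟩ := hd1
  have hd2 : (I : Ideal D) ∣ P ^ m * J := Ideal.dvd_iff_le.mpr hm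
  obtain ⟨E, hE⟩ := hd2
  have hI0 : (I : Ideal D) ≠ 0 := mem_nonZeroDivisors_iff_ne_zero.mp I.2
  have hcancel : P ^ (m + n) = E * C := by
    have : P ^ (m + n) * (I : Ideal D) = (E * C) * I := by
      rw [pow_add, mul_assoc, hC, ← mul_assoc, hE]
      ring
    exact mul_right_cancel₀ hI0 this
  have hCdvd : C ∣ P ^ (m + n) := hcancel ▸ Dvd.intro_left E rfl
  obtain ⟨i, hi, hassoc⟩ := (dvd_prime_pow hPprime _).mp hCdvd
  have hCi : C = P ^ i := associated_iff_eq.mp hassoc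
  refine ClassGroup.mk0_eq_mk0_iff.mpr ⟨p ^ n, p ^ i, pow_ne_zero _ hp.ne_zero,
    pow_ne_zero _ hp.ne_zero, ?_⟩
  rw [← Ideal.span_singleton_pow, ← Ideal.span_singleton_pow, ← hP, hC, hCi]
  ring

end Kernel

universe u

/-- for a Dedekind domain `D` and a nonzero prime element `p`, the
restriction map `[I] ↦ [I·D[1/p]]` is an isomorphism from the ideal class group of `D`
to that of `D[1/p]`. -/
theorem classGroup_localization_away_iso (D : Type u) [CommRing D] [IsDomain D]
    [IsDedekindDomain D] (p : D) (hp : Prime p) :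
    haveI hd : IsDomain (Localization.Away p) :=
      IsLocalization.isDomain_of_le_nonZeroDivisors (R := D) (S := Localization.Away p)
        (powers_le_nonZeroDivisors_of_noZeroDivisors hp.ne_zero)
    haveI : IsDedekindDomain (Localization.Away p) :=
      IsLocalization.isDedekindDomain D
        (powers_le_nonZeroDivisors_of_noZeroDivisors hp.ne_zero) (Localization.Away p)
    ∃ f : ClassGroup D →* ClassGroup (Localization.Away p),
      Function.Bijective f ∧
      ∀ (I : (Ideal D)⁰) (J : (Ideal (Localization.Away p))⁰),
        (J : Ideal (Localization.Away p)) =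
            (I : Ideal D).map (algebraMap D (Localization.Away p)) →
        f (ClassGroup.mk0 I) = ClassGroup.mk0 J := by
  haveI hd : IsDomain (Localization.Away p) :=
    IsLocalization.isDomain_of_le_nonZeroDivisors (R := D) (S := Localization.Away p)
      (powers_le_nonZeroDivisors_of_noZeroDivisors hp.ne_zero)
  haveI : IsDedekindDomain (Localization.Away p) :=
    IsLocalization.isDedekindDomain D
      (powers_le_nonZeroDivisors_of_noZeroDivisors hp.ne_zero) (Localization.Away p)
  set D' := Localization.Away p with hD'
  have hinj : Function.Injective (algebraMap D D') :=
    IsLocalization.injective _ (powers_le_nonZeroDivisors_of_noZeroDivisors hp.ne_zero)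
  have hf : D⁰ ≤ Submonoid.comap (algebraMap D D') D'⁰ := by
    intro x hx
    simp only [Submonoid.mem_comap]
    refine mem_nonZeroDivisors_of_ne_zero (fun h0 => nonZeroDivisors.ne_zero hx ?_)
    exact hinj (by rw [h0, _root_.map_zero])
  have hmem : ∀ (B : Ideal D) (a : D),
      algebraMap D D' a ∈ B.map (algebraMap D D') → ∃ n : ℕ, p ^ n * a ∈ B := by
    intro B a ha
    obtain ⟨⟨⟨b, hb⟩, ⟨s, ⟨n, rfl⟩⟩⟩, hsb⟩ :=
      (IsLocalization.mem_map_algebraMap_iff (Submonoid.powers p) _).mp ha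
    refine ⟨n, ?_⟩
    have : algebraMap D D' (a * p ^ n) = algebraMap D D' b := by
      rw [_root_.map_mul]; exact hsb
    have hab := hinj this
    rw [mul_comm] at hab
    rw [hab]; exact hb
  have hmapne : ∀ B : Ideal D, B ≠ ⊥ → B.map (algebraMap D D') ≠ ⊥ := by
    intro B hB hbot
    exact hB ((Ideal.map_eq_bot_iff_of_injective hinj).mp hbot)
  refine ⟨mapCG hf, ⟨?_, ?_⟩, fun I J hJ => mapCG_mk0 hf I J hJ⟩
  · -- injective
    rw [injective_iff_map_eq_one]
    intro x hx
    obtain ⟨I, rfl⟩ := ClassGroup.mk0_surjective x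
    have hI0 : (I : Ideal D) ≠ 0 := mem_nonZeroDivisors_iff_ne_zero.mp I.2
    have hmapI : (I : Ideal D).map (algebraMap D D') ≠ ⊥ := hmapne _ hI0
    have hmapImem : (I : Ideal D).map (algebraMap D D') ∈ (Ideal D')⁰ :=
      mem_nonZeroDivisors_iff_ne_zero.mpr hmapI
    have h1 : ClassGroup.mk0 (⟨(I : Ideal D).map (algebraMap D D'), hmapImem⟩ : (Ideal D')⁰) = 1 := by
      rw [← mapCG_mk0 hf I ⟨(I : Ideal D).map (algebraMap D D'), hmapImem⟩ rfl]
      exact hx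
    have hprin := (ClassGroup.mk0_eq_one_iff hmapImem).mp h1
    obtain ⟨z, hz⟩ := hprin.principal
    obtain ⟨⟨y, s⟩, hys⟩ := IsLocalization.surj (Submonoid.powers p) z
    have hzy : Associated z (algebraMap D D' y) :=
      ⟨(IsLocalization.map_units D' s).unit, hys⟩
    have hspan : (I : Ideal D).map (algebraMap D D') = Ideal.span {algebraMap D D' y} := by
      rw [hz, Ideal.submodule_span_eq]
      exact Ideal.span_singleton_eq_span_singleton.mpr hzy
    have hy0 : y ≠ 0 := by
      rintro rfl
      rw [_root_.map_zero] at hspan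
      exact hmapI (hspan.trans (Ideal.span_singleton_eq_bot.mpr rfl))
    have hymem : Ideal.span {y} ∈ (Ideal D)⁰ := by
      refine mem_nonZeroDivisors_iff_ne_zero.mpr ?_
      rw [Ne, Ideal.zero_eq_bot, Ideal.span_singleton_eq_bot]
      exact hy0
    have hmapy : (Ideal.span {y}).map (algebraMap D D') = (I : Ideal D).map (algebraMap D D') := by
      rw [Ideal.map_span, Set.image_singleton, hspan]
    have key : ClassGroup.mk0 I = ClassGroup.mk0 (⟨Ideal.span {y}, hymem⟩ : (Ideal D)⁰) := by
      refine mk0_eq_mk0_of_map_eq hp ?_ ?_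
      · intro a ha
        refine hmem _ a ?_
        rw [hmapy]
        exact Ideal.mem_map_of_mem _ ha
      · intro a ha
        refine hmem _ a ?_
        rw [← hmapy]
        exact Ideal.mem_map_of_mem _ ha
    rw [key]
    exact (ClassGroup.mk0_eq_one_iff hymem).mpr ⟨⟨y, by rw [Ideal.submodule_span_eq]⟩⟩
  · -- surjective
    intro c
    obtain ⟨J, rfl⟩ := ClassGroup.mk0_surjective c
    have hc : ((J : Ideal D').comap (algebraMap D D')).map (algebraMap D D') = (J : Ideal D') :=
      IsLocalization.map_comap (Submonoid.powers p) _ _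
    have hJ0 : (J : Ideal D') ≠ 0 := mem_nonZeroDivisors_iff_ne_zero.mp J.2
    have hI0 : (J : Ideal D').comap (algebraMap D D') ≠ 0 := by
      intro h0
      rw [h0, Ideal.zero_eq_bot, Ideal.map_bot] at hc
      exact hJ0 hc.symm
    exact ⟨ClassGroup.mk0 ⟨_, mem_nonZeroDivisors_iff_ne_zero.mpr hI0⟩,
      mapCG_mk0 hf _ J hc.symm⟩
end
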